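/- Let F_q be a finite field of odd order, let α_i ≠ α_j be elements of F_q, and let m₁, …, m_l be distinct nonzero elements of F_q. Define the bipartite graph G on two copies of F_q × F_q where (u, v) is adjacent to (u', v') iff there exist s ∈ {1,…,l} and nonzero a ∈ F_q with u' = u + m_s(α_j - α_i)a and v' = v + m_s(α_j - α_i)a². Then G is K_{2, 2l² - l + 1}-free: no two distinct vertices in one part have 2l² - l + 1 common neighbors in the other part. -/

import Mathlib

/-!
If `w` is a common neighbour of `u ≠ v`, write `w = u + (σ a, σ a²) = v + (τ b, τ b²)` with
multipliers `σ, τ` and put `d = v - u`. Eliminating `a` via `(σ a)² = σ (σ a²)` leaves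
`(d₁ + τ b)² = σ (d₂ + τ b²)`, and `w` is recovered from `(σ, τ, b)`. For `σ ≠ τ` this is a
genuine quadratic in `b`, so it has at most two roots; for `σ = τ` the quadratic terms cancel
and, as `2 ≠ 0` and `d ≠ 0`, a nontrivial linear equation with at most one root remains.
Summing over the `l²` pairs `(σ, τ)` gives at most `l + 2 (l² - l) = 2l² - l` common
neighbours.
-/

open Finset Polynomial Function

section Counting

variable {F : Type*} [Field F] [Fintype F] [DecidableEq F]

theorem card_filter_linear_eq_zero_le_one {b c : F} (h : b ≠ 0 ∨ c ≠ 0) :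
    #{x | b * x + c = 0} ≤ 1 := by
  rw [card_le_one]
  intro x hx y hy
  simp only [mem_filter, mem_univ, true_and] at hx hy
  by_cases hb : b = 0
  · simp [hb, h.resolve_left (not_not.mpr hb)] at hx
  · exact mul_left_cancel₀ hb (by linear_combination hx - hy)

theorem card_filter_quadratic_eq_zero_le_two {a : F} (b c : F) (ha : a ≠ 0) :
    #{x | a * x ^ 2 + b * x + c = 0} ≤ 2 := by
  have hp : C a * X ^ 2 + C b * X + C c ≠ 0 := fun h => ha <| by
    simpa [h] using (leadingCoeff_quadratic (b := b) (c := c) ha).symm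
  refine (card_le_degree_of_subset_roots (p := C a * X ^ 2 + C b * X + C c) ?_).trans
    natDegree_quadratic_le
  intro x hx
  simp_all [mem_roots hp]

theorem card_filter_sq_add_mul_eq_le_one (h2 : (2 : F) ≠ 0) {d : F × F} (hd : d ≠ 0) {τ : F}
    (hτ : τ ≠ 0) : #{b | (d.1 + τ * b) ^ 2 = τ * (d.2 + τ * b ^ 2)} ≤ 1 := by
  rw [filter_congr fun b _ => show _ ↔ (2 * d.1 * τ) * b + (d.1 ^ 2 - τ * d.2) = 0 by
    constructor <;> intro h <;> linear_combination h]
  refine card_filter_linear_eq_zero_le_one (not_and_or.mp fun ⟨h1, h0⟩ => hd ?_)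
  have hd1 : d.1 = 0 := by simpa [h2, hτ] using h1
  have hd2 : d.2 = 0 := by simpa [hd1, hτ] using h0
  exact Prod.ext hd1 hd2

theorem card_filter_sq_add_mul_eq_le_two (d : F × F) {σ τ : F} (hτ : τ ≠ 0) (hστ : σ ≠ τ) :
    #{b | (d.1 + τ * b) ^ 2 = σ * (d.2 + τ * b ^ 2)} ≤ 2 := by
  rw [filter_congr fun b _ =>
    show _ ↔ τ * (τ - σ) * b ^ 2 + 2 * d.1 * τ * b + (d.1 ^ 2 - σ * d.2) = 0 by
      constructor <;> intro h <;> linear_combination h]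
  exact card_filter_quadratic_eq_zero_le_two _ _ (mul_ne_zero hτ (sub_ne_zero.mpr hστ.symm))

theorem sum_ite_fst_eq_snd_one_two {ι : Type*} [Fintype ι] [DecidableEq ι] :
    ∑ p : ι × ι, (if p.1 = p.2 then 1 else 2) = 2 * Fintype.card ι ^ 2 - Fintype.card ι := by
  have hdiag : ({p | p.1 = p.2} : Finset (ι × ι)) = univ.diag := by ext; simp
  have hoff : ({p | ¬ p.1 = p.2} : Finset (ι × ι)) = univ.offDiag := by ext; simp
  rw [sum_ite, hdiag, hoff]
  simp only [sum_const, smul_eq_mul, diag_card, offDiag_card, card_univ]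
  have : Fintype.card ι ≤ Fintype.card ι * Fintype.card ι := Nat.le_mul_self _
  rw [sq, Nat.sub_mul]
  omega

end Counting

section ParabolaGraph

variable {F ι : Type*} [Field F]

def ParabolaAdj (μ : ι → F) (u w : F × F) : Prop :=
  ∃ s a, w.1 = u.1 + μ s * a ∧ w.2 = u.2 + μ s * a ^ 2

theorem parabolaAdj_neg_iff {μ : ι → F} {u w : F × F} :
    ParabolaAdj (-μ) u w ↔ ParabolaAdj μ w u := by
  refine exists_congr fun s => exists_congr fun a => ?_
  simp only [Pi.neg_apply]
  constructor <;> rintro ⟨h1, h2⟩ <;> constructor <;>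
    first | linear_combination -h1 | linear_combination -h2

theorem card_le_of_forall_parabolaAdj [Fintype F] [DecidableEq F] [Fintype ι]
    [DecidableEq ι] {μ : ι → F} (hμ : Injective μ) (hμ0 : ∀ s, μ s ≠ 0) (h2 : (2 : F) ≠ 0)
    {u v : F × F} (huv : u ≠ v) {W : Finset (F × F)}
    (hW : ∀ w ∈ W, ParabolaAdj μ u w ∧ ParabolaAdj μ v w) :
    #W ≤ 2 * Fintype.card ι ^ 2 - Fintype.card ι := by
  set d := v - u
  let fiber (p : ι × ι) : Finset F :=
    {b | (d.1 + μ p.2 * b) ^ 2 = μ p.1 * (d.2 + μ p.2 * b ^ 2)}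
  have hsub : W ⊆ (univ.sigma fiber).image
      fun x => (v.1 + μ x.1.2 * x.2, v.2 + μ x.1.2 * x.2 ^ 2) := by
    intro w hw
    obtain ⟨⟨s, a, hu1, hu2⟩, ⟨t, b, hv1, hv2⟩⟩ := hW w hw
    refine mem_image.mpr
      ⟨⟨(s, t), b⟩, mem_sigma.mpr ⟨mem_univ _, ?_⟩, Prod.ext hv1.symm hv2.symm⟩
    simp only [fiber, d, mem_filter, mem_univ, true_and, Prod.fst_sub, Prod.snd_sub]
    linear_combination (hu1 - hv1) * (v.1 - u.1 + μ t * b + μ s * a) - μ s * (hu2 - hv2)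
  have hfiber (p : ι × ι) : #(fiber p) ≤ if p.1 = p.2 then 1 else 2 := by
    split_ifs with hp
    · simp only [fiber, hp]
      exact card_filter_sq_add_mul_eq_le_one h2 (sub_ne_zero.mpr huv.symm) (hμ0 p.2)
    · exact card_filter_sq_add_mul_eq_le_two d (hμ0 p.2) (hμ.ne hp)
  calc #W ≤ #((univ.sigma fiber).image _) := card_le_card hsub
    _ ≤ #(univ.sigma fiber) := card_image_le
    _ = ∑ p, #(fiber p) := card_sigma _ _
    _ ≤ ∑ p : ι × ι, if p.1 = p.2 then 1 else 2 := sum_le_sum fun p _ => hfiber p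
    _ = 2 * Fintype.card ι ^ 2 - Fintype.card ι := sum_ite_fst_eq_snd_one_two

end ParabolaGraph

theorem stmt_7_general {F : Type*} [Field F] [Fintype F] [DecidableEq F]
    (hodd : Odd (Fintype.card F))
    (αi αj : F) (hij : αi ≠ αj) {l : ℕ}
    (m : Fin l → F) (hm : Function.Injective m) (hm0 : ∀ s, m s ≠ 0) :
    (¬ ∃ (u v : F × F) (W : Finset (F × F)), u ≠ v ∧ W.card = 2 * l ^ 2 - l + 1 ∧
      ∀ w ∈ W,
        (∃ (s : Fin l) (a : F), a ≠ 0 ∧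
          w.1 = u.1 + m s * (αj - αi) * a ∧ w.2 = u.2 + m s * (αj - αi) * a ^ 2) ∧
        (∃ (s : Fin l) (a : F), a ≠ 0 ∧
          w.1 = v.1 + m s * (αj - αi) * a ∧ w.2 = v.2 + m s * (αj - αi) * a ^ 2)) ∧
    (¬ ∃ (u v : F × F) (W : Finset (F × F)), u ≠ v ∧ W.card = 2 * l ^ 2 - l + 1 ∧
      ∀ w ∈ W,
        (∃ (s : Fin l) (a : F), a ≠ 0 ∧
          u.1 = w.1 + m s * (αj - αi) * a ∧ u.2 = w.2 + m s * (αj - αi) * a ^ 2) ∧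
        (∃ (s : Fin l) (a : F), a ≠ 0 ∧
          v.1 = w.1 + m s * (αj - αi) * a ∧ v.2 = w.2 + m s * (αj - αi) * a ^ 2)) := by
  have h2 : (2 : F) ≠ 0 := Ring.two_ne_zero fun h => by
    have := FiniteField.even_card_iff_char_two.mp h
    rw [Nat.odd_iff] at hodd
    omega
  have hc : αj - αi ≠ 0 := sub_ne_zero.mpr hij.symm
  set μ : Fin l → F := fun s => m s * (αj - αi)
  have hμ : Injective μ := fun s t h => hm (mul_right_cancel₀ hc h)
  have hμ0 (s : Fin l) : μ s ≠ 0 := mul_ne_zero (hm0 s) hc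
  constructor
  · rintro ⟨u, v, W, huv, hW, hadj⟩
    have := card_le_of_forall_parabolaAdj hμ hμ0 h2 huv fun w hw =>
      have ⟨⟨s, a, _, hu⟩, ⟨t, b, _, hv⟩⟩ := hadj w hw
      ⟨⟨s, a, hu⟩, ⟨t, b, hv⟩⟩
    rw [Fintype.card_fin] at this
    omega
  · rintro ⟨u, v, W, huv, hW, hadj⟩
    have := card_le_of_forall_parabolaAdj (neg_injective.comp hμ)
      (fun s => neg_ne_zero.mpr (hμ0 s)) h2 huv fun w hw =>
        have ⟨⟨s, a, _, hu⟩, ⟨t, b, _, hv⟩⟩ := hadj w hw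
        ⟨parabolaAdj_neg_iff.mpr ⟨s, a, hu⟩, parabolaAdj_neg_iff.mpr ⟨t, b, hv⟩⟩
    rw [Fintype.card_fin] at this
    omega

/-- The `l`-colored bipartite link graph `H(Vᵢ, Vⱼ)` is `K_{2, 2l² - l + 1}`-free:
no two distinct vertices in one part have `2l² - l + 1` common neighbors in the
other part. -/
theorem stmt_7 {F : Type*} [Field F] [Fintype F] [DecidableEq F]
    (hodd : Odd (Fintype.card F))
    (αi αj : F) (hij : αi ≠ αj) {l : ℕ} (hl : 1 ≤ l)
    (m : Fin l → F) (hm : Function.Injective m) (hm0 : ∀ s, m s ≠ 0) :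
    (¬ ∃ (u v : F × F) (W : Finset (F × F)), u ≠ v ∧ W.card = 2 * l ^ 2 - l + 1 ∧
      ∀ w ∈ W,
        (∃ (s : Fin l) (a : F), a ≠ 0 ∧
          w.1 = u.1 + m s * (αj - αi) * a ∧ w.2 = u.2 + m s * (αj - αi) * a ^ 2) ∧
        (∃ (s : Fin l) (a : F), a ≠ 0 ∧
          w.1 = v.1 + m s * (αj - αi) * a ∧ w.2 = v.2 + m s * (αj - αi) * a ^ 2)) ∧
    (¬ ∃ (u v : F × F) (W : Finset (F × F)), u ≠ v ∧ W.card = 2 * l ^ 2 - l + 1 ∧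
      ∀ w ∈ W,
        (∃ (s : Fin l) (a : F), a ≠ 0 ∧
          u.1 = w.1 + m s * (αj - αi) * a ∧ u.2 = w.2 + m s * (αj - αi) * a ^ 2) ∧
        (∃ (s : Fin l) (a : F), a ≠ 0 ∧
          v.1 = w.1 + m s * (αj - αi) * a ∧ v.2 = w.2 + m s * (αj - αi) * a ^ 2)) :=
  stmt_7_general hodd αi αj hij m hm hm0
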